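/- For every vertex j, the spectral expression (1/π(j)) · ∑_{k=2}^{n} v_{k,j}²/(1 − λ_k) is at least (1 − π(j))²/π(j), which in turn is at least 2|E|/d_j − 2. (Consequently the average target hitting time H_j satisfies H_j ≥ 2|E|/d_j − 2.) -/

import Mathlib

/-!
Since `B` has zero diagonal, expanding `B j j` in the orthonormal eigenbasis gives
`∑ₖ λₖ v_{k,j}² = 0`, while orthonormality gives `∑ₖ v_{k,j}² = 1` and `v_{1,j}² = π(j)`.
Removing the top eigenvector (with `λ₁ = 1`), the weights `v_{k,j}²`, `k ≥ 2`, have total mass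
`1 - π(j)` and satisfy `∑ₖ v_{k,j}² (1 - λₖ) = 1`, so Cauchy–Schwarz yields
`(1 - π(j))² ≤ ∑ₖ v_{k,j}² / (1 - λₖ)`.
-/

open Finset Matrix

section Orthonormal

variable {ι R : Type*} [Fintype ι] [DecidableEq ι] [CommRing R]

theorem sum_mul_eq_ite_of_orthonormal_rows {v : ι → ι → R}
    (horth : ∀ k l, ∑ x, v k x * v l x = if k = l then 1 else 0) (x y : ι) :
    ∑ k, v k x * v k y = if x = y then 1 else 0 := by
  have hrows : Matrix.of v * (Matrix.of v)ᵀ = 1 := by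
    ext k l
    simpa [Matrix.mul_apply, Matrix.one_apply] using horth k l
  have hcols : (Matrix.of v)ᵀ * Matrix.of v = 1 := mul_eq_one_comm.mp hrows
  simpa [Matrix.mul_apply, Matrix.one_apply] using congrFun₂ hcols x y

theorem Matrix.apply_eq_sum_eigenvalue_mul_of_orthonormal {B : Matrix ι ι R} {lam : ι → R}
    {v : ι → ι → R} (heig : ∀ k, B *ᵥ v k = lam k • v k)
    (horth : ∀ k l, ∑ x, v k x * v l x = if k = l then 1 else 0) (x y : ι) :
    B x y = ∑ k, lam k * v k x * v k y := by
  calc B x y = ∑ z, B x z * ∑ k, v k z * v k y := by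
        simp [sum_mul_eq_ite_of_orthonormal_rows horth]
    _ = ∑ k, (B *ᵥ v k) x * v k y := by
        simp only [Matrix.mulVec, dotProduct, Finset.mul_sum, Finset.sum_mul]
        rw [Finset.sum_comm]
        simp only [mul_assoc]
    _ = ∑ k, lam k * v k x * v k y := by simp [heig]

end Orthonormal

theorem Finset.sq_sum_le_sum_div_mul_sum_mul {ι R : Type*} [Semifield R] [LinearOrder R]
    [IsStrictOrderedRing R] [ExistsAddOfLE R] (s : Finset ι) {a w : ι → R}
    (ha : ∀ i ∈ s, 0 ≤ a i) (hw : ∀ i ∈ s, 0 < w i) :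
    (∑ i ∈ s, a i) ^ 2 ≤ (∑ i ∈ s, a i / w i) * ∑ i ∈ s, a i * w i :=
  sum_sq_le_sum_mul_sum_of_sq_le_mul s
    (fun i hi => div_nonneg (ha i hi) (hw i hi).le)
    (fun i hi => mul_nonneg (ha i hi) (hw i hi).le)
    (fun i hi => le_of_eq (by field_simp [(hw i hi).ne']))

/-- For every vertex j, (1/π(j))·∑_{k=2}^n v_{k,j}²/(1−λ_k) ≥ (1−π(j))²/π(j) ≥ 2|E|/d_j − 2. -/
theorem stmt_8
    (n : ℕ) (hn : 2 ≤ n)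
    (A : Matrix (Fin n) (Fin n) ℝ)
    (hdiag : ∀ i, A i i = 0)
    (d : Fin n → ℝ)
    (hdpos : ∀ i, 0 < d i)
    (twoE : ℝ) (htwoE : twoE = ∑ i, d i)
    (B : Matrix (Fin n) (Fin n) ℝ)
    (hB : ∀ i j, B i j = A i j / (Real.sqrt (d i) * Real.sqrt (d j)))
    (lam : Fin n → ℝ) (v : Fin n → Fin n → ℝ)
    (hmono : Antitone lam)
    (hlam1 : lam ⟨0, by omega⟩ = 1)
    (heig : ∀ k, B.mulVec (v k) = lam k • v k)
    (horth : ∀ k l, (∑ x, v k x * v l x) = (if k = l then (1 : ℝ) else 0))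
    (hv1 : ∀ j, v ⟨0, by omega⟩ j = Real.sqrt (d j / twoE))
    (hgap : lam ⟨1, by omega⟩ < 1) :
    ∀ j, (twoE / d j - 2 ≤ (1 - d j / twoE) ^ 2 / (d j / twoE)) ∧
      (1 - d j / twoE) ^ 2 / (d j / twoE) ≤
        (twoE / d j) * ∑ k ∈ Finset.univ.filter (fun k : Fin n => k.val ≠ 0), (v k j) ^ 2 / (1 - lam k) := by
  intro j
  have htwoE_pos : 0 < twoE := htwoE ▸ sum_pos (fun i _ => hdpos i) ⟨j, mem_univ j⟩
  set p := d j / twoE with hp_def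
  have hp : 0 < p := div_pos (hdpos j) htwoE_pos
  have hinv : twoE / d j = 1 / p := by rw [hp_def, one_div_div]
  refine ⟨?_, ?_⟩
  · have hexpand : (1 - p) ^ 2 / p = 1 / p - 2 + p := by field_simp; ring
    rw [hinv, hexpand]
    linarith
  set S := univ.filter (fun k : Fin n => k.val ≠ 0)
  have hS : S = univ.erase ⟨0, by omega⟩ := by ext k; simp [S, Fin.ext_iff]
  have hsum_sq : ∑ k, v k j ^ 2 = 1 := by
    simpa [sq] using sum_mul_eq_ite_of_orthonormal_rows horth j j
  have hsum_lam : ∑ k, lam k * v k j ^ 2 = 0 := by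
    have h := B.apply_eq_sum_eigenvalue_mul_of_orthonormal heig horth j j
    simp only [hB, hdiag, zero_div, mul_assoc, ← sq] at h
    exact h.symm
  have hmass : ∑ k ∈ S, v k j ^ 2 = 1 - p := by
    rw [hS, sum_erase_eq_sub (mem_univ _), hsum_sq, hv1, Real.sq_sqrt hp.le]
  have hdirichlet : ∑ k ∈ S, v k j ^ 2 * (1 - lam k) = 1 := by
    rw [hS, sum_erase_eq_sub (mem_univ _), hlam1, sub_self, mul_zero, sub_zero]
    simp only [mul_one_sub, sum_sub_distrib, hsum_sq, mul_comm _ (lam _), hsum_lam, sub_zero]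
  have hgap_pos : ∀ k ∈ S, 0 < 1 - lam k := fun k hk =>
    sub_pos.mpr ((hmono (Nat.one_le_iff_ne_zero.mpr (mem_filter.mp hk).2)).trans_lt hgap)
  have hcs := sq_sum_le_sum_div_mul_sum_mul S (fun k _ => sq_nonneg (v k j)) hgap_pos
  rw [hmass, hdirichlet, mul_one] at hcs
  rwa [hinv, div_le_iff₀ hp, one_div_mul_eq_div, div_mul_cancel₀ _ hp.ne']
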